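/- Let q be an odd prime and let G be the dihedral group of order 4q, presented as G = ⟨r, s : r^{2q} = s² = (sr)² = 1⟩. Set H_1 = ⟨s⟩, H_2 = ⟨sr⟩ and H_3 = ⟨r⟩. Then for every nontrivial finite-dimensional complex irreducible representation V of G, one has dim V^{H_1} + dim V^{H_2} + dim V^{H_3} = dim V. -/

import Mathlib

/-!
For a finite group `H` acting on `V`, `|H| · dim V^H = ∑_{h ∈ H} χ(h)`. For a subgroup `⟨t⟩` of
order two this reads `2 dim V^⟨t⟩ = dim V + χ(t)`, and for `⟨r⟩` it is the sum of `χ` over the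
rotations. Conjugation by `r` shifts the index of a reflection `sr i` by two, so `χ` takes only the
values `χ(s)` and `χ(sr)` on the `2q` reflections, `q` times each. Summing `χ` over all of `G`
therefore gives `dim V^{H_1} + dim V^{H_2} + dim V^{H_3} = dim V + 2 dim V^G` for every
representation, and `V^G = 0` when `V` is irreducible and nontrivial.
-/

open Module Finset DihedralGroup

theorem ZMod.sum_eq_sum_range {M : Type*} [AddCommMonoid M] {n : ℕ} [NeZero n]
    (f : ZMod n → M) : ∑ i : ZMod n, f i = ∑ k ∈ range n, f k := by
  obtain ⟨n, rfl⟩ := Nat.exists_eq_succ_of_ne_zero (NeZero.ne n)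
  rw [← Fin.sum_univ_eq_sum_range (fun k => f k)]
  exact Fintype.sum_congr _ _ fun i => congrArg f (ZMod.natCast_zmod_val (n := n + 1) i).symm

theorem Function.Periodic.sum_range_two_mul {M : Type*} [AddCommMonoid M] {f : ℕ → M}
    (hf : Function.Periodic f 2) (n : ℕ) : ∑ k ∈ range (2 * n), f k = n • (f 0 + f 1) := by
  induction n with
  | zero => simp
  | succ n ih =>
    have h0 : f (2 * n) = f 0 := by simpa [mul_comm] using hf.nat_mul_eq n
    have h1 : f (2 * n + 1) = f 1 := by simpa [mul_comm, add_comm] using (hf.nat_mul n) 1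
    rw [mul_add_one, sum_range_succ, sum_range_succ, ih, h0, h1, succ_nsmul, add_assoc]

theorem DihedralGroup.sum_eq_sum_range {M : Type*} [AddCommMonoid M] {n : ℕ} [NeZero n]
    (f : DihedralGroup n → M) : ∑ g, f g = ∑ k ∈ range n, (f (r k) + f (sr k)) := by
  rw [← Fintype.sum_equiv equivSum.symm (fun x => f (equivSum.symm x)) f fun _ => rfl,
    Fintype.sum_sum_type, ZMod.sum_eq_sum_range, ZMod.sum_eq_sum_range, ← sum_add_distrib]
  rfl

namespace Representation

variable {k G V : Type*} [Field k] [AddCommGroup V] [Module k V]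

theorem invariants_eq_bot_of_irreducible [Group G] {ρ : Representation k G V}
    (hirr : ∀ U : Submodule k V, (∀ g : G, ∀ v ∈ U, ρ g v ∈ U) → U = ⊥ ∨ U = ⊤)
    (hnontriv : ∃ (g : G) (v : V), ρ g v ≠ v) : invariants ρ = ⊥ := by
  refine (hirr _ fun g v hv => by rw [hv g]; exact hv).resolve_right fun htop => ?_
  obtain ⟨g, v, hv⟩ := hnontriv
  exact hv ((mem_invariants ρ v).1 (htop ▸ Submodule.mem_top) g)

theorem character_sr_add_two {n : ℕ} (ρ : Representation k (DihedralGroup n) V) (i : ZMod n) :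
    ρ.character (sr (i + 2)) = ρ.character (sr i) := by
  rw [← char_conj ρ (sr i) (r (-1)), r_mul_sr, inv_r, sr_mul_r]
  ring_nf

variable [CharZero k] [FiniteDimensional k V]

theorem sum_character_eq_card_mul_finrank_invariants [Group G] [Fintype G]
    (ρ : Representation k G V) :
    ∑ g : G, ρ.character g = Nat.card G * finrank k (invariants ρ) := by
  have hG : (Nat.card G : k) ≠ 0 := Nat.cast_ne_zero.2 Nat.card_pos.ne'
  have : Invertible (Nat.card G : k) := invertibleOfNonzero hG
  rw [← card_inv_mul_sum_char_eq_finrank, mul_inv_cancel_left₀ hG]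

theorem sum_range_orderOf_character_eq [Group G] [Finite G] (ρ : Representation k G V) (t : G) :
    ∑ i ∈ range (orderOf t), ρ.character (t ^ i) =
      orderOf t * finrank k (invariants (ρ.comp (Subgroup.zpowers t).subtype)) := by
  have := Fintype.ofFinite (Subgroup.zpowers t)
  calc ∑ i ∈ range (orderOf t), ρ.character (t ^ i)
      = ∑ h : Subgroup.zpowers t, character (ρ.comp (Subgroup.zpowers t).subtype) h := by
        rw [← Fin.sum_univ_eq_sum_range]
        exact Fintype.sum_equiv (finEquivZPowers (isOfFinOrder_of_finite t)) _ _ fun _ => rfl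
    _ = _ := by rw [sum_character_eq_card_mul_finrank_invariants, Nat.card_zpowers]

theorem two_mul_finrank_invariants_zpowers_of_orderOf_eq_two [Group G] [Finite G]
    (ρ : Representation k G V) {t : G} (ht : orderOf t = 2) :
    2 * finrank k (invariants (ρ.comp (Subgroup.zpowers t).subtype)) =
      finrank k V + ρ.character t := by
  have h := sum_range_orderOf_character_eq ρ t
  simp only [ht, sum_range_succ, range_zero, sum_empty, pow_zero, pow_one, char_one,
    zero_add] at h
  rw [h]
  push_cast
  rfl

theorem finrank_invariants_sr_zero_add_sr_one_add_r_one {n : ℕ} [NeZero n]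
    (ρ : Representation k (DihedralGroup (2 * n)) V) :
    finrank k (invariants (ρ.comp (Subgroup.zpowers (sr 0)).subtype)) +
      finrank k (invariants (ρ.comp (Subgroup.zpowers (sr 1)).subtype)) +
      finrank k (invariants (ρ.comp (Subgroup.zpowers (r 1)).subtype)) =
      finrank k V + 2 * finrank k (invariants ρ) := by
  have h_sr0 := two_mul_finrank_invariants_zpowers_of_orderOf_eq_two ρ (orderOf_sr 0)
  have h_sr1 := two_mul_finrank_invariants_zpowers_of_orderOf_eq_two ρ (orderOf_sr 1)
  have h_r : ∑ j ∈ range (2 * n), ρ.character (r j) = (2 * n : ℕ) *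
      finrank k (invariants (ρ.comp (Subgroup.zpowers (r 1)).subtype)) := by
    simpa only [orderOf_r_one, r_one_pow] using sum_range_orderOf_character_eq ρ (r 1)
  have h_sr : ∑ j ∈ range (2 * n), ρ.character (sr j) =
      n * (ρ.character (sr 0) + ρ.character (sr 1)) := by
    have hper : Function.Periodic (fun j : ℕ => ρ.character (sr j)) 2 := fun i => by
      simpa using character_sr_add_two ρ i
    simpa [nsmul_eq_mul, mul_add] using hper.sum_range_two_mul n
  have h_G := sum_character_eq_card_mul_finrank_invariants ρ
  rw [sum_eq_sum_range, sum_add_distrib, h_r, h_sr, nat_card] at h_G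
  have hn : (2 * n : k) ≠ 0 := by simp [NeZero.ne n]
  apply Nat.cast_injective (R := k)
  apply mul_left_cancel₀ hn
  push_cast at h_G ⊢
  linear_combination (n : k) * h_sr0 + (n : k) * h_sr1 + h_G

end Representation

theorem dihedral_admissible_invariants_general {q : ℕ} (hq : q.Prime)
    {V : Type*} [AddCommGroup V] [Module ℂ V] [FiniteDimensional ℂ V]
    (ρ : Representation ℂ (DihedralGroup (2 * q)) V)
    (hirr : ∀ U : Submodule ℂ V,
      (∀ g : DihedralGroup (2 * q), ∀ v ∈ U, ρ g v ∈ U) → U = ⊥ ∨ U = ⊤)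
    (hnontriv : ∃ (g : DihedralGroup (2 * q)) (v : V), ρ g v ≠ v) :
    Module.finrank ℂ
        (Representation.invariants
          (ρ.comp (Subgroup.zpowers (DihedralGroup.sr 0)).subtype)) +
      Module.finrank ℂ
        (Representation.invariants
          (ρ.comp (Subgroup.zpowers (DihedralGroup.sr 1)).subtype)) +
      Module.finrank ℂ
        (Representation.invariants
          (ρ.comp (Subgroup.zpowers (DihedralGroup.r 1)).subtype)) =
      Module.finrank ℂ V := by
  have : NeZero q := ⟨hq.ne_zero⟩
  rw [Representation.finrank_invariants_sr_zero_add_sr_one_add_r_one,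
    Representation.invariants_eq_bot_of_irreducible hirr hnontriv, finrank_bot, mul_zero, add_zero]

/-- Let `q` be an odd prime and `G` the dihedral group of order `4q`, with `r` the rotation
of order `2q` and `s`, `s*r` reflections.  For every nontrivial finite-dimensional complex
irreducible representation `ρ` of `G` on `V` one has
`dim V^{⟨s⟩} + dim V^{⟨sr⟩} + dim V^{⟨r⟩} = dim V`. -/
theorem dihedral_admissible_invariants {q : ℕ} (hq : q.Prime) (hodd : Odd q)
    {V : Type*} [AddCommGroup V] [Module ℂ V] [FiniteDimensional ℂ V]
    (ρ : Representation ℂ (DihedralGroup (2 * q)) V)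
    (hirr : ∀ U : Submodule ℂ V,
      (∀ g : DihedralGroup (2 * q), ∀ v ∈ U, ρ g v ∈ U) → U = ⊥ ∨ U = ⊤)
    (hnontriv : ∃ (g : DihedralGroup (2 * q)) (v : V), ρ g v ≠ v) :
    Module.finrank ℂ
        (Representation.invariants
          (ρ.comp (Subgroup.zpowers (DihedralGroup.sr 0)).subtype)) +
      Module.finrank ℂ
        (Representation.invariants
          (ρ.comp (Subgroup.zpowers (DihedralGroup.sr 1)).subtype)) +
      Module.finrank ℂ
        (Representation.invariants
          (ρ.comp (Subgroup.zpowers (DihedralGroup.r 1)).subtype)) =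
      Module.finrank ℂ V :=
  dihedral_admissible_invariants_general hq ρ hirr hnontriv
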